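/- arXiv:2008.06740 — 3 statements merged into one kernel-verified Lean document; each statement's English description precedes it below -/
import Mathlib

section
/- Let C be a shortest even hole of a graph G, let u and v be distinct vertices of C, let the uv-path P of G be a C-shallow worst C-shortcut, and let C1, C2 be the uv-paths of C with ‖C1‖ < ‖C2‖. Let x (respectively, y) be the neighbor of u (respectively, v) in C1, and let C3 be the xy-path of C1. Then every xy-path P_xy of G with ‖P_xy‖ = ‖C3‖ satisfies that G[P_xy ∪ C2] is a hole of G. -/
open SimpleGraph

variable {V : Type*}

/-- The vertex set of a walk. -/
def suppSet {G : SimpleGraph V} {u v : V} (w : G.Walk u v) : Set V :=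
  {x | x ∈ w.support}

/-- An induced cycle of `G`. -/
def IsInducedCycle (G : SimpleGraph V) {r : V} (w : G.Walk r r) : Prop :=
  w.IsCycle ∧ ∀ a b : V, a ∈ w.support → b ∈ w.support → G.Adj a b → s(a, b) ∈ w.edges

/-- A hole of `G`: an induced cycle with at least 4 vertices. -/
def IsHole (G : SimpleGraph V) {r : V} (w : G.Walk r r) : Prop :=
  IsInducedCycle G w ∧ 4 ≤ w.length

/-- An even hole of `G`. -/
def IsEvenHole (G : SimpleGraph V) {r : V} (w : G.Walk r r) : Prop :=
  IsHole G w ∧ Even w.length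

/-- A shortest even hole of `G`. -/
def IsShortestEvenHole (G : SimpleGraph V) {r : V} (w : G.Walk r r) : Prop :=
  IsEvenHole G w ∧ ∀ (y : V) (w' : G.Walk y y), IsEvenHole G w' → w.length ≤ w'.length

/-- `P` is a path of `G` all of whose edges lie on the walk `c`
(used for "a `uv`-path of `C`"). -/
def IsPathOf (G : SimpleGraph V) {p q u v : V} (c : G.Walk p q) (P : G.Walk u v) : Prop :=
  P.IsPath ∧ ∀ e ∈ P.edges, e ∈ c.edges

/-- The distance `d_C(u,v)` between `u` and `v` within the cycle `c`. -/
noncomputable def cycleDist (G : SimpleGraph V) {r : V} (c : G.Walk r r) (u v : V) : ℕ :=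
  sInf {n | ∃ P : G.Walk u v, IsPathOf G c P ∧ P.length = n}

/-- The induced subgraph `G[S]` is a hole of `G`. -/
def IsHoleOn (G : SimpleGraph V) (S : Set V) : Prop :=
  ∃ (r : V) (w : G.Walk r r), IsHole G w ∧ suppSet w = S

/-- The induced subgraph `G[S]` is an even hole of `G`. -/
def IsEvenHoleOn (G : SimpleGraph V) (S : Set V) : Prop :=
  ∃ (r : V) (w : G.Walk r r), IsEvenHole G w ∧ suppSet w = S

/-- The induced subgraph `G[S]` is a shortest even hole of `G`. -/
def IsShortestEvenHoleOn (G : SimpleGraph V) (S : Set V) : Prop :=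
  ∃ (r : V) (w : G.Walk r r), IsShortestEvenHole G w ∧ suppSet w = S

/-- `P` is `C`-good: the union of `P` and one of the two `uv`-paths of `C`
is again a shortest even hole of `G`. -/
def CGood (G : SimpleGraph V) {r u v : V} (c : G.Walk r r) (P : G.Walk u v) : Prop :=
  ∃ Q : G.Walk u v, IsPathOf G c Q ∧ IsShortestEvenHoleOn G (suppSet P ∪ suppSet Q)

/-- The standing assumptions for `C`-shortcuts: `P` is a `uv`-path of `G` for distinct
nonadjacent vertices `u`, `v` of `C`. -/
def ShortcutSetup (G : SimpleGraph V) {r u v : V} (c : G.Walk r r) (P : G.Walk u v) : Prop :=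
  P.IsPath ∧ u ≠ v ∧ ¬G.Adj u v ∧ u ∈ c.support ∧ v ∈ c.support

/-- `P` is a `C`-shortcut: `2 ≤ ‖P‖ ≤ d_C(u,v)` and `‖P‖ < ‖C‖/4`. -/
def CShortcut (G : SimpleGraph V) {r u v : V} (c : G.Walk r r) (P : G.Walk u v) : Prop :=
  2 ≤ P.length ∧ P.length ≤ cycleDist G c u v ∧ 4 * P.length < c.length

/-- `C1` and `C2` are the two `uv`-paths of the cycle `c`. -/
def ArcPair (G : SimpleGraph V) {r u v : V} (c : G.Walk r r) (C1 C2 : G.Walk u v) : Prop :=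
  IsPathOf G c C1 ∧ IsPathOf G c C2 ∧ C1.length + C2.length = c.length ∧
    ∀ e ∈ c.edges, e ∈ C1.edges ∨ e ∈ C2.edges

/-- `P` is `C`-shallow: `‖P‖ ≥ d_C(u,v) − 1` and `G[P ∪ C2]` is a hole, where `C2` is the
longer of the two `uv`-paths of `C`. -/
def CShallow (G : SimpleGraph V) {r u v : V} (c : G.Walk r r) (P : G.Walk u v) : Prop :=
  cycleDist G c u v - 1 ≤ P.length ∧
    ∀ C1 C2 : G.Walk u v, ArcPair G c C1 C2 → C1.length ≤ C2.length →
      IsHoleOn G (suppSet P ∪ suppSet C2)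

/-- `P` is a worst `C`-shortcut. -/
def WorstCShortcut (G : SimpleGraph V) {r u v : V} (c : G.Walk r r) (P : G.Walk u v) : Prop :=
  ShortcutSetup G c P ∧ CShortcut G c P ∧ ¬CGood G c P ∧
    ∀ (u' v' : V) (P' : G.Walk u' v'),
      ShortcutSetup G c P' → CShortcut G c P' → ¬CGood G c P' →
        (P.length < P'.length ∨
          (P.length = P'.length ∧ cycleDist G c u' v' ≤ cycleDist G c u v))

/-- `C` is good in `G`: every `C`-shortcut is `C`-good. -/
def GoodHole (G : SimpleGraph V) {r : V} (c : G.Walk r r) : Prop :=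
  ∀ (u v : V) (P : G.Walk u v), ShortcutSetup G c P → CShortcut G c P → CGood G c P

/-- `P` is a shortest `uv`-path of `G`. -/
def IsShortestPath (G : SimpleGraph V) {u v : V} (P : G.Walk u v) : Prop :=
  P.IsPath ∧ ∀ Q : G.Walk u v, P.length ≤ Q.length

/-- The closed neighborhood `N_G[S]` of a vertex set `S`. -/
def closedNbhd (G : SimpleGraph V) (S : Set V) : Set V :=
  S ∪ {x | ∃ y ∈ S, G.Adj y x}

/-- The subgraph of `G` induced on `S` (kept on the same vertex type: edges of `G`
with both ends in `S`). -/
def restrictTo (G : SimpleGraph V) (S : Set V) : SimpleGraph V where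
  Adj a b := G.Adj a b ∧ a ∈ S ∧ b ∈ S
  symm := ⟨fun a b h => ⟨h.1.symm, h.2.2, h.2.1⟩⟩
  loopless := ⟨fun a h => G.loopless.irrefl a h.1⟩

/-- The vertex set of `H(u,v,x,y) = G[(V(G) \ N_G[V(P_uv ∪ P_xy) \ {u,v}]) ∪ {u,v}]`. -/
def Hverts (G : SimpleGraph V) {u v a b : V} (Puv : G.Walk u v) (Pxy : G.Walk a b) : Set V :=
  (Set.univ \ closedNbhd G ((suppSet Puv ∪ suppSet Pxy) \ {u, v})) ∪ {u, v}

/-- The graph `H(u,v,x,y)`. -/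
def Hgraph (G : SimpleGraph V) {u v a b : V} (Puv : G.Walk u v) (Pxy : G.Walk a b) :
    SimpleGraph V :=
  restrictTo G (Hverts G Puv Pxy)

/-- `G` is shallow. -/
def ShallowGraph (G : SimpleGraph V) : Prop :=
  ∃ (r : V) (c : G.Walk r r), IsShortestEvenHole G c ∧
    ∀ (u v : V) (P : G.Walk u v), WorstCShortcut G c P → CShallow G c P

/-- `G` is anti-shallow. -/
def AntiShallowGraph (G : SimpleGraph V) : Prop :=
  ∀ (r : V) (c : G.Walk r r), IsShortestEvenHole G c → ¬GoodHole G c →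
    ∀ (u v : V) (P : G.Walk u v), WorstCShortcut G c P → ¬CShallow G c P

/-- The induced subgraph `G[S]` is a path with end-vertices `u` and `v`. -/
def IsInducedPathOn (G : SimpleGraph V) (u v : V) (S : Set V) : Prop :=
  ∃ Q : G.Walk u v, Q.IsPath ∧ suppSet Q = S ∧
    ∀ a b : V, a ∈ S → b ∈ S → G.Adj a b → s(a, b) ∈ Q.edges


/-!
Write `C1 = u x ⋯ y v`, so that `C3` is the middle of `C1` and the other `xy`-arc of `C`
is `x u C2 v y`. If `‖C3‖ ≤ 1`, then `P_xy` and `C3` have the same vertices, so `P_xy ∪ C2`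
spans `C` itself. Otherwise `P_xy` is a `C`-shortcut strictly shorter than `P` (shallowness
gives `‖P‖ ≥ ‖C1‖ - 1 = ‖C3‖ + 1`), hence `C`-good since `P` is a worst shortcut. Closing
`P_xy` with `C3` would give a hole on at most `2‖C3‖ + 2 < ‖C‖` vertices, so `P_xy` closes up
into a shortest even hole with the long arc `x u C2 v y`, which has the same vertices as
`P_xy ∪ C2`.
-/

namespace SimpleGraph.Walk

variable {G : SimpleGraph V} {u v x y : V}

lemma mem_suppSet {w : G.Walk u v} {z : V} : z ∈ suppSet w ↔ z ∈ w.support :=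
  Iff.rfl

lemma suppSet_finite (w : G.Walk u v) : (suppSet w).Finite :=
  w.support.finite_toSet

lemma suppSet_eq_coe_toFinset [DecidableEq V] (w : G.Walk u v) :
    suppSet w = ↑w.support.toFinset := by
  ext
  simp [suppSet]

lemma ncard_suppSet_le (w : G.Walk u v) : (suppSet w).ncard ≤ w.length + 1 := by
  classical
  rw [suppSet_eq_coe_toFinset, Set.ncard_coe_finset, ← length_support]
  exact List.toFinset_card_le _

lemma IsPath.ncard_suppSet {w : G.Walk u v} (hw : w.IsPath) :
    (suppSet w).ncard = w.length + 1 := by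
  classical
  rw [suppSet_eq_coe_toFinset, Set.ncard_coe_finset,
    List.toFinset_card_of_nodup hw.support_nodup, length_support]

lemma IsCycle.ncard_suppSet {w : G.Walk u u} (hw : w.IsCycle) :
    (suppSet w).ncard = w.length := by
  have hsupp : suppSet w = suppSet w.tail := by
    ext z
    rw [mem_suppSet, mem_suppSet, ← cons_support_tail hw.not_nil, List.mem_cons]
    exact or_iff_right_of_imp fun h => h ▸ w.tail.end_mem_support
  rw [hsupp, hw.isPath_tail.ncard_suppSet, length_tail]
  have := hw.three_le_length
  omega

lemma suppSet_eq_of_length_eq_of_length_le_one {p q : G.Walk u v} (h : p.length = q.length)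
    (hq : q.length ≤ 1) : suppSet p = suppSet q := by
  rcases p with _ | ⟨_, _ | ⟨_, p⟩⟩ <;> rcases q with _ | ⟨_, _ | ⟨_, q⟩⟩ <;>
    simp only [length_cons, length_nil] at h hq <;> first | rfl | omega

lemma suppSet_union_cons_concat (Q : G.Walk x y) (hxu : G.Adj x u) (D : G.Walk u v)
    (hvy : G.Adj v y) :
    suppSet Q ∪ suppSet ((cons hxu D).concat hvy) = suppSet Q ∪ suppSet D := by
  have := Q.start_mem_support
  have := Q.end_mem_support
  ext z
  simp only [Set.mem_union, mem_suppSet, support_concat, support_cons, List.mem_cons,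
    List.mem_append]
  grind

lemma IsPath.exists_eq_cons_of_mem_edges {p : G.Walk u v} (hp : p.IsPath)
    (h : s(u, x) ∈ p.edges) : ∃ (hux : G.Adj u x) (q : G.Walk x v), p = cons hux q := by
  cases p with
  | nil => simp at h
  | cons hadj q =>
    have hx := hp.eq_snd_of_mem_edges h
    rw [snd_cons] at hx
    subst hx
    exact ⟨hadj, q, rfl⟩

lemma IsPath.exists_eq_concat_of_mem_edges {p : G.Walk u v} (hp : p.IsPath)
    (h : s(v, y) ∈ p.edges) : ∃ (hyv : G.Adj y v) (q : G.Walk u y), p = q.concat hyv := by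
  obtain ⟨hvy, q, hq⟩ := hp.reverse.exists_eq_cons_of_mem_edges (by simpa using h)
  refine ⟨hvy.symm, q.reverse, ?_⟩
  rw [← p.reverse_reverse, hq, reverse_cons, concat_eq_append]

lemma IsPath.exists_eq_cons_concat {p : G.Walk u v} (hp : p.IsPath) (huv : ¬G.Adj u v)
    (hx : s(u, x) ∈ p.edges) (hy : s(v, y) ∈ p.edges) :
    ∃ (hux : G.Adj u x) (hyv : G.Adj y v) (q : G.Walk x y), p = cons hux (q.concat hyv) := by
  obtain ⟨hux, p, rfl⟩ := hp.exists_eq_cons_of_mem_edges hx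
  have hy' : s(v, y) ∈ p.edges := by
    rw [edges_cons, List.mem_cons, Sym2.eq_iff] at hy
    rcases hy with (⟨rfl, -⟩ | ⟨rfl, rfl⟩) | hy
    · exact absurd p.end_mem_support ((cons_isPath_iff _ _).mp hp).2
    · exact absurd hux huv
    · exact hy
  obtain ⟨hyv, q, rfl⟩ := hp.of_cons.exists_eq_concat_of_mem_edges hy'
  exact ⟨hux, hyv, q, rfl⟩

end SimpleGraph.Walk

open SimpleGraph.Walk

section Arcs

variable {G : SimpleGraph V}

lemma IsPathOf.trans {p q u v x y : V} {c : G.Walk p q} {P : G.Walk u v} {Q : G.Walk x y}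
    (hQ : IsPathOf G P Q) (hP : IsPathOf G c P) : IsPathOf G c Q :=
  ⟨hQ.1, fun e he => hP.2 e (hQ.2 e he)⟩

lemma IsPathOf.length_le {p q u v : V} {c : G.Walk p q} {P : G.Walk u v}
    (hP : IsPathOf G c P) : P.length ≤ c.length := by
  rw [← length_edges, ← length_edges]
  exact (hP.1.edges_nodup.subperm hP.2).length_le

variable {r a b : V} {c : G.Walk r r} {D1 D2 : G.Walk a b}

lemma ArcPair.symm (h : ArcPair G c D1 D2) : ArcPair G c D2 D1 :=
  ⟨h.2.1, h.1, (Nat.add_comm _ _).trans h.2.2.1, fun e he => (h.2.2.2 e he).symm⟩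

lemma ArcPair.reverse (h : ArcPair G c D1 D2) : ArcPair G c D1.reverse D2.reverse := by
  obtain ⟨⟨hp1, he1⟩, ⟨hp2, he2⟩, hlen, hcov⟩ := h
  exact ⟨⟨hp1.reverse, by simpa using he1⟩, ⟨hp2.reverse, by simpa using he2⟩,
    by simpa using hlen, by simpa using hcov⟩

lemma ArcPair.suppSet_union (h : ArcPair G c D1 D2) (hc : c.IsCycle) (hab : a ≠ b) :
    suppSet D1 ∪ suppSet D2 = suppSet c := by
  have hnil (W : G.Walk a b) : ¬W.Nil := fun hW => hab hW.eq
  ext z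
  simp only [Set.mem_union, mem_suppSet,
    mem_support_iff_exists_mem_edges_of_not_nil (hnil D1),
    mem_support_iff_exists_mem_edges_of_not_nil (hnil D2),
    mem_support_iff_exists_mem_edges_of_not_nil hc.not_nil]
  constructor
  · rintro (⟨e, he, hz⟩ | ⟨e, he, hz⟩)
    exacts [⟨e, h.1.2 e he, hz⟩, ⟨e, h.2.1.2 e he, hz⟩]
  · rintro ⟨e, he, hz⟩
    exact (h.2.2.2 e he).imp (fun he => ⟨e, he, hz⟩) (fun he => ⟨e, he, hz⟩)

lemma ArcPair.start_mem_support (h : ArcPair G c D1 D2) (hc : c.IsCycle) (hab : a ≠ b) :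
    a ∈ c.support := by
  rw [← mem_suppSet, ← h.suppSet_union hc hab]
  exact .inl D1.start_mem_support

lemma ArcPair.end_mem_support (h : ArcPair G c D1 D2) (hc : c.IsCycle) (hab : a ≠ b) :
    b ∈ c.support := by
  rw [← mem_suppSet, ← h.suppSet_union hc hab]
  exact .inl D1.end_mem_support

lemma ArcPair.suppSet_inter (h : ArcPair G c D1 D2) (hc : c.IsCycle) (hab : a ≠ b) :
    suppSet D1 ∩ suppSet D2 = {a, b} := by
  have hcard := Set.ncard_union_add_ncard_inter _ _ (suppSet_finite D1) (suppSet_finite D2)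
  rw [h.suppSet_union hc hab, hc.ncard_suppSet, h.1.1.ncard_suppSet, h.2.1.1.ncard_suppSet,
    ← h.2.2.1] at hcard
  refine (Set.eq_of_subset_of_ncard_le ?_ ?_ ((suppSet_finite D1).inter_of_left _)).symm
  · rintro z (rfl | rfl)
    exacts [⟨D1.start_mem_support, D2.start_mem_support⟩,
      ⟨D1.end_mem_support, D2.end_mem_support⟩]
  · rw [Set.ncard_pair hab]
    omega

lemma ArcPair.tail {w : V} {h : G.Adj a w} {q : G.Walk w b} (harc : ArcPair G c (cons h q) D2)
    (hc : c.IsCycle) (hab : a ≠ b) (hwb : w ≠ b) : ArcPair G c q (cons h.symm D2) := by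
  have hw : w ∉ D2.support := fun hw => by
    have : w ∈ suppSet (cons h q) ∩ suppSet D2 := ⟨by simp [suppSet], hw⟩
    rw [harc.suppSet_inter hc hab] at this
    rcases this with rfl | rfl
    exacts [h.ne rfl, hwb rfl]
  obtain ⟨⟨hp1, he1⟩, ⟨hp2, he2⟩, hlen, hcov⟩ := harc
  refine ⟨⟨hp1.of_cons, fun e he => he1 e (by simp [he])⟩, ⟨hp2.cons hw, ?_⟩, ?_, ?_⟩
  · intro e he
    rw [edges_cons, List.mem_cons] at he
    rcases he with rfl | he
    exacts [Sym2.eq_swap ▸ he1 _ (by simp), he2 e he]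
  · simp only [length_cons] at hlen ⊢
    omega
  · intro e he
    rcases hcov e he with he | he
    · rw [edges_cons, List.mem_cons] at he
      rcases he with rfl | he
      exacts [.inr (by simp [Sym2.eq_swap]), .inl he]
    · exact .inr (by simp [he])

lemma ArcPair.of_cons_concat {x y : V} {hax : G.Adj a x} {hyb : G.Adj y b} {q : G.Walk x y}
    (harc : ArcPair G c (cons hax (q.concat hyb)) D2) (hc : c.IsCycle) (hab : a ≠ b)
    (hxy : x ≠ y) : ArcPair G c q ((cons hax.symm D2).concat hyb.symm) := by
  have hb : b ∉ q.support := ((concat_isPath_iff _).mp harc.1.1.of_cons).2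
  have hxb : x ≠ b := fun h => hb (h ▸ q.start_mem_support)
  have h := (harc.tail hc hab hxb).reverse
  rw [reverse_concat] at h
  simpa [concat_eq_append, reverse_cons] using (h.tail hc hxb.symm (Ne.symm hxy)).reverse

lemma ArcPair.suppSet_middle_union {x y : V} {hax : G.Adj a x} {hyb : G.Adj y b}
    {q : G.Walk x y} (harc : ArcPair G c (cons hax (q.concat hyb)) D2) (hc : c.IsCycle)
    (hab : a ≠ b) : suppSet q ∪ suppSet D2 = suppSet c := by
  rw [← harc.suppSet_union hc hab]
  have := D2.start_mem_support
  have := D2.end_mem_support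
  ext z
  simp only [Set.mem_union, mem_suppSet, support_concat, support_cons, List.mem_cons,
    List.mem_append]
  grind

lemma ArcPair.eq_or_eq_of_isPathOf (harc : ArcPair G c D1 D2) (hc : c.IsCycle) (hab : a ≠ b)
    {W : G.Walk a b} (hW : IsPathOf G c W) : W = D1 ∨ W = D2 := by
  induction W with
  | nil => exact absurd rfl hab
  | @cons a w b hadj W ih =>
    suffices key : ∀ {E1 E2 : G.Walk a b}, ArcPair G c E1 E2 → s(a, w) ∈ E1.edges →
        cons hadj W = E1 by
      rcases harc.2.2.2 _ (hW.2 _ (by simp : s(a, w) ∈ (cons hadj W).edges)) with h | h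
      exacts [.inl (key harc h), .inr (key harc.symm h)]
    intro E1 E2 hE he
    obtain ⟨h1, q, rfl⟩ := hE.1.1.exists_eq_cons_of_mem_edges he
    by_cases hwb : w = b
    · subst hwb
      rw [(isPath_iff_nil.mp hW.1.of_cons).eq_nil, (isPath_iff_nil.mp hE.1.1.of_cons).eq_nil]
    · rcases ih (hE.tail hc hab hwb) hwb ⟨hW.1.of_cons, fun e he => hW.2 e (by simp [he])⟩
        with rfl | rfl
      · rfl
      · exact absurd (by simp) ((cons_isPath_iff _ _).mp hW.1).2

lemma ArcPair.eq_of_isPathOf_cons_concat {x y : V} {hax : G.Adj a x} {hyb : G.Adj y b}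
    {q : G.Walk x y} (harc : ArcPair G c (cons hax (q.concat hyb)) D2) (hc : c.IsCycle)
    (hab : a ≠ b) (hle : (cons hax (q.concat hyb)).length ≤ D2.length) {Q : G.Walk x y}
    (hQ : IsPathOf G (cons hax (q.concat hyb)) Q) : Q = q := by
  have hq : q.IsPath := ((concat_isPath_iff _).mp harc.1.1.of_cons).1
  by_cases hxy : x = y
  · subst hxy
    rw [(isPath_iff_nil.mp hQ.1).eq_nil, (isPath_iff_nil.mp hq).eq_nil]
  · refine ((harc.of_cons_concat hc hab hxy).eq_or_eq_of_isPathOf hc hxy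
      (hQ.trans harc.1)).resolve_right ?_
    rintro rfl
    have := hQ.length_le
    simp only [length_cons, length_concat] at this hle
    omega

lemma ArcPair.cycleDist_eq (harc : ArcPair G c D1 D2) (hc : c.IsCycle) (hab : a ≠ b)
    (hle : D1.length ≤ D2.length) : cycleDist G c a b = D1.length := by
  refine le_antisymm (Nat.sInf_le ⟨D1, harc.1, rfl⟩) (le_csInf ⟨_, D1, harc.1, rfl⟩ ?_)
  rintro n ⟨W, hW, rfl⟩
  rcases harc.eq_or_eq_of_isPathOf hc hab hW with rfl | rfl
  exacts [le_rfl, hle]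

lemma ArcPair.not_adj (harc : ArcPair G c D1 D2) (hind : IsInducedCycle G c)
    (h1 : 2 ≤ D1.length) (h2 : 2 ≤ D2.length) : ¬G.Adj a b := by
  intro hadj
  have hedge := hind.2 a b (harc.start_mem_support hind.1 hadj.ne)
    (harc.end_mem_support hind.1 hadj.ne) hadj
  rcases harc.2.2.2 _ hedge with he | he
  · have := harc.1.1.length_eq_one_of_mem_edges he
    omega
  · have := harc.2.1.1.length_eq_one_of_mem_edges he
    omega

end Arcs

section Holes

variable {G : SimpleGraph V} {r a b : V} {c : G.Walk r r}

lemma IsShortestEvenHole.isHole (hC : IsShortestEvenHole G c) : IsHole G c :=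
  hC.1.1

lemma IsShortestEvenHole.length_le_ncard (hC : IsShortestEvenHole G c) {S : Set V}
    (hS : IsShortestEvenHoleOn G S) : c.length ≤ S.ncard := by
  obtain ⟨r', w, hw, rfl⟩ := hS
  rw [hw.isHole.1.1.ncard_suppSet]
  exact hC.2 r' w hw.1

lemma IsShortestEvenHoleOn.isHoleOn {S : Set V} (hS : IsShortestEvenHoleOn G S) :
    IsHoleOn G S :=
  let ⟨r', w, hw, hwS⟩ := hS
  ⟨r', w, hw.isHole, hwS⟩

lemma WorstCShortcut.cGood_of_length_lt {u v x y : V} {P : G.Walk u v}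
    (hP : WorstCShortcut G c P) {Q : G.Walk x y} (hQs : ShortcutSetup G c Q)
    (hQ : CShortcut G c Q) (hlt : Q.length < P.length) : CGood G c Q := by
  by_contra hbad
  rcases hP.2.2.2 x y Q hQs hQ hbad with h | ⟨h, -⟩ <;> omega

lemma CGood.isShortestEvenHoleOn_union_long_arc {D1 D2 Q : G.Walk a b} (hgood : CGood G c Q)
    (hC : IsShortestEvenHole G c) (harc : ArcPair G c D1 D2) (hab : a ≠ b)
    (hQ : Q.length = D1.length) (hshort : 2 * D1.length + 2 < c.length) :
    IsShortestEvenHoleOn G (suppSet Q ∪ suppSet D2) := by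
  obtain ⟨A, hA, hhole⟩ := hgood
  rcases harc.eq_or_eq_of_isPathOf hC.isHole.1.1 hab hA with rfl | rfl
  · have hlen := hC.length_le_ncard hhole
    have hcard := (Set.ncard_union_le _ _).trans
      (add_le_add (ncard_suppSet_le Q) (ncard_suppSet_le A))
    omega
  · exact hhole

end Holes

theorem stmt5 (G : SimpleGraph V) {r u v : V} (c : G.Walk r r)
    (hC : IsShortestEvenHole G c) (P : G.Walk u v)
    (hworst : WorstCShortcut G c P) (hshallow : CShallow G c P)
    (C1 C2 : G.Walk u v) (harc : ArcPair G c C1 C2) (hlt : C1.length < C2.length)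
    (x y : V) (hx : s(u, x) ∈ C1.edges) (hy : s(v, y) ∈ C1.edges)
    (C3 : G.Walk x y) (hC3 : IsPathOf G C1 C3) :
    ∀ Pxy : G.Walk x y, Pxy.IsPath → Pxy.length = C3.length →
      IsHoleOn G (suppSet Pxy ∪ suppSet C2) := by
  intro Pxy hPxy hPxylen
  have hc : c.IsCycle := hC.isHole.1.1
  have huv : u ≠ v := hworst.1.2.1
  obtain ⟨hux, hyv, C3', rfl⟩ := harc.1.1.exists_eq_cons_concat hworst.1.2.2.1 hx hy
  obtain rfl := harc.eq_of_isPathOf_cons_concat hc huv hlt.le hC3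
  have hdist : cycleDist G c u v = C3.length + 2 := by
    simpa using harc.cycleDist_eq hc huv hlt.le
  have hPlen : cycleDist G c u v - 1 ≤ P.length := hshallow.1
  have hP : 4 * P.length < c.length := hworst.2.1.2.2
  have hclen := harc.2.2.1
  simp only [length_cons, length_concat] at hlt hclen
  rcases le_or_gt C3.length 1 with hsmall | hlong
  · refine ⟨r, c, hC.isHole, ?_⟩
    rw [suppSet_eq_of_length_eq_of_length_le_one hPxylen hsmall,
      harc.suppSet_middle_union hc huv]
  · have hxy : x ≠ y := by
      rintro rfl
      simp [(isPath_iff_nil.mp hC3.1).eq_nil] at hlong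
    have harcxy := harc.of_cons_concat hc huv hxy
    have hgood : CGood G c Pxy := by
      refine hworst.cGood_of_length_lt
        ⟨hPxy, hxy, harcxy.not_adj hC.isHole.1 hlong (by simp),
          harcxy.start_mem_support hc hxy, harcxy.end_mem_support hc hxy⟩
        ⟨by omega, ?_, by omega⟩ (by omega)
      rw [harcxy.cycleDist_eq hc hxy (by simp only [length_concat, length_cons]; omega)]
      omega
    rw [← suppSet_union_cons_concat Pxy hux.symm C2 hyv.symm]
    exact (hgood.isShortestEvenHoleOn_union_long_arc hC harcxy hxy hPxylen (by omega)).isHoleOn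
end

section
/- Let C be a shortest even hole of a graph G, let u and v be distinct vertices of C, let the uv-path P of G be a C-shallow worst C-shortcut, and let C1, C2 be the uv-paths of C with ‖C1‖ ≤ ‖C2‖. Let x (respectively, y) be the neighbor of u (respectively, v) in C1. Let P_uv be a shortest uv-path of G and P_xy a shortest xy-path of G. Then the interior (the set of non-end vertices) of C2 is disjoint from N_G[V(P_uv ∪ P_xy) \ {u,v}]; consequently, C2 is contained in H(u,v,x,y) = G[(V(G) \ N_G[V(P_uv ∪ P_xy) \ {u,v}]) ∪ {u,v}], the vertices u and v are connected in H(u,v,x,y), and every shortest uv-path Q of H(u,v,x,y) satisfies ‖Q‖ ≤ ‖C2‖. -/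
open SimpleGraph

variable {V : Type*}

/-!
A path running along a cycle is determined by its first edge, so between two vertices of `C`
there are exactly two such paths, of complementary lengths, and `d_C` is the shorter one.
Counting vertices, a good shortcut closes a hole of length at most its own length plus that of
an arc of `C`; as this hole is no shorter than `C`, the shortcut is as long as the distance
along `C`. Hence a shortest path between two vertices of `C` is either geodesic along `C`, or a
bad shortcut that is no shorter than the worst shortcut `P`, or longer than `P`.

If an inner vertex `t` of `C₂` were on or next to an inner vertex of `P_uv`, the distances from
`t` to `u` and to `v` would add up to at most `‖P‖ + 2`, and no combination of the three cases
allows this (one combination is ruled out only by the parity of `‖C‖`). The path `P_xy` is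
shorter than `P`, hence a good shortcut, and its hole can only be `P_xy` together with the arc
`x u C₂ v y`; a vertex of `P_xy` next to an inner vertex of `C₂` would give that vertex three
neighbours on the hole. So `C₂` survives in `H(u,v,x,y)`.
-/

section

open Walk

variable {G : SimpleGraph V} {r s t u v : V} {c : G.Walk r r} {P C₁ C₂ : G.Walk u v}

theorem SimpleGraph.Walk.IsPath.append {w : V} {p : G.Walk u v} {q : G.Walk v w}
    (hp : p.IsPath) (hq : q.IsPath) (h : ∀ x ∈ p.support, x ∈ q.support → x = v) :
    (p.append q).IsPath := by
  rw [isPath_def, support_append]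
  refine hp.support_nodup.append (cons_tail_support q ▸ hq.support_nodup).of_cons ?_
  intro x hxp hxq
  have hvq : v ∈ q.support.tail := h x hxp (List.mem_of_mem_tail hxq) ▸ hxq
  have hnd := hq.support_nodup
  rw [← cons_tail_support q, List.nodup_cons] at hnd
  exact hnd.1 hvq

theorem SimpleGraph.Walk.IsPath.exists_ne_of_mem {p : G.Walk u v} (hp : p.IsPath)
    (ht : t ∈ p.support) (htu : t ≠ u) (htv : t ≠ v) :
    ∃ a b, a ≠ b ∧ s(t, a) ∈ p.edges ∧ s(t, b) ∈ p.edges := by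
  obtain ⟨q, r, -, -, rfl⟩ := hp.mem_support_iff_exists_append.mp ht
  have hq : ¬q.Nil := not_nil_of_ne htu.symm
  have hr : ¬r.Nil := not_nil_of_ne htv
  refine ⟨q.penultimate, r.snd, ?_, ?_, ?_⟩
  · exact hp.ne_of_mem_support_of_append (r.adj_snd hr).ne' (q.getVert_mem_support _)
      (r.getVert_mem_support _)
  · rw [Sym2.eq_swap]
    exact edges_append q r ▸ List.mem_append_left _ (mk_penultimate_end_mem_edges hq)
  · exact edges_append q r ▸ List.mem_append_right _ (mk_start_snd_mem_edges hr)

theorem eq_or_eq_of_mem_support_of_length_le_one {p : G.Walk u v} (hp : p.length ≤ 1)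
    {w : V} (hw : w ∈ p.support) : w = u ∨ w = v := by
  cases p with
  | nil => simp_all
  | cons h p =>
    cases p with
    | nil => simpa using hw
    | cons => simp at hp

theorem exists_isShortestPath (W : G.Walk s t) : ∃ R : G.Walk s t, IsShortestPath G R := by
  obtain ⟨R, hR, hlen⟩ := W.reachable.exists_path_of_dist
  exact ⟨R, hR, fun Q => hlen ▸ dist_le Q⟩

theorem mem_closedNbhd_iff {S : Set V} :
    t ∈ closedNbhd G S ↔ ∃ z ∈ S, z = t ∨ G.Adj z t := by
  simp only [closedNbhd, Set.mem_union, Set.mem_ofPred_eq]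
  exact ⟨fun h => h.elim (fun h => ⟨t, h, Or.inl rfl⟩) fun ⟨z, hz, h⟩ => ⟨z, hz, Or.inr h⟩,
    fun ⟨z, hz, h⟩ => h.elim (fun h => Or.inl (h ▸ hz)) fun h => Or.inr ⟨z, hz, h⟩⟩

theorem exists_walk_restrictTo {S : Set V} (W : G.Walk s t) (hW : suppSet W ⊆ S) :
    ∃ W' : (restrictTo G S).Walk s t, W'.length = W.length := by
  refine ⟨W.transfer _ fun e he => ?_, W.length_transfer _⟩
  induction e using Sym2.ind with
  | _ x y =>
    exact ⟨W.adj_of_mem_edges he, hW (W.fst_mem_support_of_mem_edges he),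
      hW (W.snd_mem_support_of_mem_edges he)⟩

theorem SimpleGraph.Walk.IsCycle.card_support_toFinset [DecidableEq V] (hc : c.IsCycle) :
    c.support.toFinset.card = c.length := by
  have hr : r ∈ c.support.tail := c.end_mem_tail_support hc.not_nil
  rw [← cons_tail_support c, List.toFinset_cons, Finset.insert_eq_of_mem (List.mem_toFinset.mpr hr),
    List.toFinset_card_of_nodup hc.2, List.length_tail, length_support, Nat.add_sub_cancel]

theorem SimpleGraph.Walk.IsCycle.eq_or_eq_or_eq_of_mem_edges {z₁ z₂ z₃ : V} (hc : c.IsCycle)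
    (h₁ : s(t, z₁) ∈ c.edges) (h₂ : s(t, z₂) ∈ c.edges) (h₃ : s(t, z₃) ∈ c.edges) :
    z₁ = z₂ ∨ z₁ = z₃ ∨ z₂ = z₃ := by
  have hN := hc.ncard_neighborSet_toSubgraph_eq_two (c.fst_mem_support_of_mem_edges h₁)
  have hmem : ∀ z, s(t, z) ∈ c.edges → z ∈ c.toSubgraph.neighborSet t := fun z hz =>
    Subgraph.mem_edgeSet.mp ((mem_edges_toSubgraph c).mpr hz)
  by_contra! hne
  have h3 : ({z₁, z₂, z₃} : Set V).ncard = 3 :=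
    Set.ncard_eq_three.mpr ⟨z₁, z₂, z₃, hne.1, hne.2.1, hne.2.2, rfl⟩
  have hsub : ({z₁, z₂, z₃} : Set V) ⊆ c.toSubgraph.neighborSet t := by
    rintro z (rfl | rfl | rfl) <;> exact hmem _ ‹_›
  have := Set.ncard_le_ncard hsub (Set.finite_of_ncard_pos (by omega))
  omega

theorem SimpleGraph.Walk.IsCycle.length_add_card_inter [DecidableEq V] {a b : V}
    {w : G.Walk r r} (hw : w.IsCycle) {A B : G.Walk a b} (hA : A.IsPath) (hB : B.IsPath)
    (h : suppSet w = suppSet A ∪ suppSet B) :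
    w.length + (A.support.toFinset ∩ B.support.toFinset).card = A.length + B.length + 2 := by
  have hF : w.support.toFinset = A.support.toFinset ∪ B.support.toFinset := by
    ext z
    simpa [suppSet] using Set.ext_iff.mp h z
  have := Finset.card_union_add_card_inter A.support.toFinset B.support.toFinset
  rw [← hF, hw.card_support_toFinset, List.toFinset_card_of_nodup hA.support_nodup,
    List.toFinset_card_of_nodup hB.support_nodup, length_support, length_support] at this
  omega

theorem pair_subset_inter_support [DecidableEq V] (A B : G.Walk s t) :
    {s, t} ⊆ A.support.toFinset ∩ B.support.toFinset := by
  intro z hz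
  rcases Finset.mem_insert.mp hz with rfl | hz
  · simp
  · rw [Finset.mem_singleton.mp hz]
    simp

theorem two_le_card_inter_support [DecidableEq V] (hst : s ≠ t) (A B : G.Walk s t) :
    2 ≤ (A.support.toFinset ∩ B.support.toFinset).card :=
  Finset.card_pair hst ▸ Finset.card_le_card (pair_subset_inter_support A B)

theorem eq_or_eq_of_card_inter_support_le_two [DecidableEq V] (hst : s ≠ t) {A B : G.Walk s t}
    (h : (A.support.toFinset ∩ B.support.toFinset).card ≤ 2) {x : V} (hA : x ∈ A.support)
    (hB : x ∈ B.support) : x = s ∨ x = t := by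
  have heq := Finset.eq_of_subset_of_card_le (pair_subset_inter_support A B)
    (Finset.card_pair hst ▸ h)
  have hx : x ∈ ({s, t} : Finset V) := heq ▸ by simp [hA, hB]
  simpa using hx

theorem IsEvenHole.isCycle (hc : IsEvenHole G c) : c.IsCycle :=
  hc.1.1.1

theorem IsEvenHole.mem_edges_of_adj (hc : IsEvenHole G c) (hs : s ∈ c.support)
    (ht : t ∈ c.support) (hst : G.Adj s t) : s(s, t) ∈ c.edges :=
  hc.1.1.2 s t hs ht hst

theorem isPathOf_cons_nil (hst : G.Adj s t) (he : s(s, t) ∈ c.edges) :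
    IsPathOf G c (cons hst nil) :=
  ⟨by simp [hst.ne], by simpa using he⟩

theorem IsPathOf.mem_support {Q : G.Walk s t} (hQ : IsPathOf G c Q) (hst : s ≠ t) {w : V}
    (hw : w ∈ Q.support) : w ∈ c.support := by
  obtain ⟨e, he, hwe⟩ := (mem_support_iff_exists_mem_edges_of_not_nil (not_nil_of_ne hst)).mp hw
  exact mem_support_of_mem_edges (hQ.2 e he) hwe

theorem IsPathOf.reverse {Q : G.Walk s t} (hQ : IsPathOf G c Q) : IsPathOf G c Q.reverse :=
  ⟨hQ.1.reverse, fun e he => hQ.2 e (by simpa using he)⟩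

theorem IsPathOf.append {w : V} {Q : G.Walk s t} {R : G.Walk t w} (hQ : IsPathOf G c Q)
    (hR : IsPathOf G c R) (h : ∀ x ∈ Q.support, x ∈ R.support → x = t) :
    IsPathOf G c (Q.append R) :=
  ⟨hQ.1.append hR.1 h, fun e he => by
    rcases List.mem_append.mp (edges_append Q R ▸ he) with he | he
    exacts [hQ.2 e he, hR.2 e he]⟩

theorem IsPathOf.of_cons {a : V} {h : G.Adj a s} {Q : G.Walk s t}
    (hQ : IsPathOf G c (cons h Q)) : IsPathOf G c Q :=
  ⟨((cons_isPath_iff h Q).mp hQ.1).1, fun e he => hQ.2 e (List.mem_cons_of_mem _ he)⟩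

theorem IsPathOf.eq_of_snd_eq (hc : c.IsCycle) {Q R : G.Walk s t} (hQ : IsPathOf G c Q)
    (hR : IsPathOf G c R) (h : Q.snd = R.snd) : Q = R := by
  induction Q with
  | nil => exact (eq_nil_iff_nil.mpr (isPath_iff_nil.mp hR.1)).symm
  | @cons a b t hab Q ih =>
    cases R with
    | nil => exact absurd hQ.1 (by simp)
    | cons hab' R =>
      obtain rfl : b = _ := by simpa using h
      suffices Q = R by rw [this]
      have hQ' := hQ.of_cons
      have hR' := hR.of_cons
      by_cases hbt : b = t
      · subst hbt
        rw [eq_nil_iff_nil.mpr (isPath_iff_nil.mp hQ'.1),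
          eq_nil_iff_nil.mpr (isPath_iff_nil.mp hR'.1)]
      have haQ : a ∉ Q.support := ((cons_isPath_iff _ _).mp hQ.1).2
      have haR : a ∉ R.support := ((cons_isPath_iff _ _).mp hR.1).2
      have hba : s(b, a) ∈ c.edges := hQ.2 _ (by simp [Sym2.eq_swap])
      have hbQ : s(b, Q.snd) ∈ Q.edges := mk_start_snd_mem_edges (not_nil_of_ne hbt)
      have hbR : s(b, R.snd) ∈ R.edges := mk_start_snd_mem_edges (not_nil_of_ne hbt)
      rcases hc.eq_or_eq_or_eq_of_mem_edges (hQ'.2 _ hbQ) (hR'.2 _ hbR) hba with h | h | h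
      · exact ih hQ' hR' h
      · exact absurd (h ▸ Q.snd_mem_support_of_mem_edges hbQ) haQ
      · exact absurd (h ▸ R.snd_mem_support_of_mem_edges hbR) haR

/-- The two paths are the two pieces of the cycle, rotated to start at `s`, cut at `t`. -/
theorem SimpleGraph.Walk.IsCycle.exists_isPathOf_eq_or_eq (hc : c.IsCycle) (hs : s ∈ c.support)
    (ht : t ∈ c.support) (hst : s ≠ t) :
    ∃ A B : G.Walk s t, IsPathOf G c A ∧ IsPathOf G c B ∧ A.length + B.length = c.length ∧
      ∀ Q : G.Walk s t, IsPathOf G c Q → Q = A ∨ Q = B := by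
  classical
  set c' := c.rotate s hs
  have hc' : c'.IsCycle := hc.rotate hs
  have ht' : t ∈ c'.support := (mem_support_rotate_iff c s hs).mpr ht
  have hedges : ∀ e ∈ c'.edges, e ∈ c.edges := fun e he => (rotate_edges c s hs).mem_iff.mp he
  set A := c'.takeUntil t ht'
  set D := c'.dropUntil t ht'
  have hAD : A.append D = c' := take_spec c' ht'
  have hAnil : ¬A.Nil := not_nil_of_ne hst
  have hDnil : ¬D.Nil := not_nil_of_ne hst.symm
  have hA : IsPathOf G c A :=
    ⟨hc'.isPath_takeUntil ht', fun e he => hedges e (edges_takeUntil_subset_edges c' ht' he)⟩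
  have hB : IsPathOf G c D.reverse :=
    IsPathOf.reverse ⟨IsCycle.isPath_of_append_right hAnil (by rwa [hAD] : (A.append D).IsCycle),
      fun e he => hedges e (edges_dropUntil_subset_edges c' ht' he)⟩
  have hAsnd : A.snd = c'.snd := snd_takeUntil hst.symm c' ht'
  have hBsnd : D.reverse.snd = c'.penultimate := by
    rw [snd_reverse, ← hAD, penultimate, penultimate, getVert_append, length_append,
      if_neg (by have := hDnil; rw [← length_eq_zero_iff] at this; omega)]
    congr 1
    omega
  refine ⟨A, D.reverse, hA, hB, ?_, fun Q hQ => ?_⟩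
  · rw [length_reverse, ← length_append, hAD, length_rotate]
  have hsnd : ∀ R : G.Walk s t, IsPathOf G c R → s(s, R.snd) ∈ c.edges := fun R hR =>
    hR.2 _ (mk_start_snd_mem_edges (not_nil_of_ne hst))
  rcases hc.eq_or_eq_or_eq_of_mem_edges (hsnd Q hQ) (hsnd A hA) (hsnd _ hB) with h | h | h
  · exact Or.inl (hQ.eq_of_snd_eq hc hA h)
  · exact Or.inr (hQ.eq_of_snd_eq hc hB h)
  · exact absurd (hAsnd ▸ hBsnd ▸ h) hc'.snd_ne_penultimate

theorem SimpleGraph.Walk.IsCycle.exists_arcs (hc : c.IsCycle) (hs : s ∈ c.support)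
    (ht : t ∈ c.support) (hst : s ≠ t) :
    ∃ A B : G.Walk s t, IsPathOf G c A ∧ IsPathOf G c B ∧ A.length + B.length = c.length ∧
      A.length = cycleDist G c s t ∧ A.length ≤ B.length ∧
      ∀ Q : G.Walk s t, IsPathOf G c Q → Q = A ∨ Q = B := by
  obtain ⟨A, B, hA, hB, hAB, hQ⟩ := hc.exists_isPathOf_eq_or_eq hs ht hst
  wlog hle : A.length ≤ B.length generalizing A B
  · exact this B A hB hA (by omega) (fun Q h => (hQ Q h).symm) (by omega)
  refine ⟨A, B, hA, hB, hAB, le_antisymm ?_ (Nat.sInf_le ⟨A, hA, rfl⟩), hle, hQ⟩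
  refine le_csInf ⟨_, A, hA, rfl⟩ ?_
  rintro _ ⟨Q, hQ', rfl⟩
  rcases hQ Q hQ' with rfl | rfl <;> omega

theorem SimpleGraph.Walk.IsCycle.cycleDist_eq_min (hc : c.IsCycle) {R₁ R₂ : G.Walk s t}
    (hR₁ : IsPathOf G c R₁) (hR₂ : IsPathOf G c R₂) (hsum : R₁.length + R₂.length = c.length)
    (hst : s ≠ t) : cycleDist G c s t = min R₁.length R₂.length := by
  obtain ⟨A, B, -, -, hAB, hA, hle, h⟩ := hc.exists_arcs
    (hR₁.mem_support hst R₁.start_mem_support) (hR₁.mem_support hst R₁.end_mem_support) hst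
  rcases h R₁ hR₁ with rfl | rfl <;> rcases h R₂ hR₂ with rfl | rfl <;> omega

theorem IsEvenHole.cycleDist_eq_one_of_adj (hc : IsEvenHole G c) (hs : s ∈ c.support)
    (ht : t ∈ c.support) (hst : G.Adj s t) : cycleDist G c s t = 1 := by
  obtain ⟨A, B, -, -, -, hA, hAB, h⟩ := hc.isCycle.exists_arcs hs ht hst.ne
  have hA0 : A.length ≠ 0 := fun h0 => hst.ne (eq_of_length_eq_zero h0)
  rcases h _ (isPathOf_cons_nil hst (hc.mem_edges_of_adj hs ht hst)) with h | h <;> subst h <;>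
    simp at hA hAB <;> omega

theorem ArcPair.suppSet_eq (h : ArcPair G c C₁ C₂) (hc : c.IsCycle) (huv : u ≠ v) :
    suppSet c = suppSet C₁ ∪ suppSet C₂ := by
  ext w
  refine ⟨fun hw => ?_, fun hw => ?_⟩
  · obtain ⟨e, he, hwe⟩ := (mem_support_iff_exists_mem_edges_of_not_nil hc.not_nil).mp hw
    rcases h.2.2.2 e he with he | he
    exacts [Or.inl (mem_support_of_mem_edges he hwe), Or.inr (mem_support_of_mem_edges he hwe)]
  · rcases hw with hw | hw
    exacts [h.1.mem_support huv hw, h.2.1.mem_support huv hw]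

theorem ArcPair.eq_or_eq_of_mem (h : ArcPair G c C₁ C₂) (hc : c.IsCycle) (huv : u ≠ v) {w : V}
    (h₁ : w ∈ C₁.support) (h₂ : w ∈ C₂.support) : w = u ∨ w = v := by
  classical
  have := hc.length_add_card_inter h.1.1 h.2.1.1 (h.suppSet_eq hc huv)
  have := h.2.2.1
  exact eq_or_eq_of_card_inter_support_le_two huv (by omega) h₁ h₂

theorem ArcPair.not_adj_s9 (h : ArcPair G c C₁ C₂) (hc : IsEvenHole G c) (huv : u ≠ v) {z : V}
    (hz₁ : z ∈ C₁.support) (hz₂ : z ∉ C₂.support) (ht₂ : t ∈ C₂.support)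
    (ht₁ : t ∉ C₁.support) : ¬G.Adj z t := fun hzt => by
  rcases h.2.2.2 _ (hc.mem_edges_of_adj (h.1.mem_support huv hz₁)
      (h.2.1.mem_support huv ht₂) hzt) with he | he
  exacts [ht₁ (C₁.snd_mem_support_of_mem_edges he), hz₂ (C₂.fst_mem_support_of_mem_edges he)]

theorem ArcPair.cycleDist_eq_s9 (h : ArcPair G c C₁ C₂) (hc : c.IsCycle) (huv : u ≠ v)
    (hle : C₁.length ≤ C₂.length) : cycleDist G c u v = C₁.length := by
  rw [hc.cycleDist_eq_min h.1 h.2.1 h.2.2.1 huv, min_eq_left hle]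

/-- Splitting `C₂` at `t` into `q : u ⟶ t` and `r : t ⟶ v`, with `j = ‖q‖`, the arcs from `t`
to `u` are `q` and `r ++ C₁`, and those from `t` to `v` are `r` and `q ++ C₁`. -/
theorem ArcPair.exists_cycleDist_eq_of_mem (h : ArcPair G c C₁ C₂) (hc : c.IsCycle) (huv : u ≠ v)
    (ht : t ∈ C₂.support) (htu : t ≠ u) (htv : t ≠ v) :
    ∃ j, 0 < j ∧ j < C₂.length ∧
      cycleDist G c t u = min j (C₂.length - j + C₁.length) ∧
      cycleDist G c t v = min (C₂.length - j) (j + C₁.length) := by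
  obtain ⟨q, r, -, -, rfl⟩ := h.2.1.1.mem_support_iff_exists_append.mp ht
  have hqr := h.2.1
  have hq : IsPathOf G c q := ⟨hqr.1.of_append_left, fun e he => hqr.2 e (by simp [he])⟩
  have hr : IsPathOf G c r := ⟨hqr.1.of_append_right, fun e he => hqr.2 e (by simp [he])⟩
  have hinter : ∀ x ∈ C₁.support, x ∈ q.support ∨ x ∈ r.support → x = u ∨ x = v :=
    fun x h₁ h₂ => h.eq_or_eq_of_mem hc huv h₁ ((mem_support_append_iff q r).mpr h₂)
  have hu : u ∉ r.support := fun hu =>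
    hqr.1.ne_of_mem_support_of_append htu.symm q.start_mem_support hu rfl
  have hv : v ∉ q.support := fun hv =>
    hqr.1.ne_of_mem_support_of_append htv.symm hv r.end_mem_support rfl
  have hu₂ : IsPathOf G c (r.append C₁.reverse) := hr.append h.1.reverse fun x hxr hx₁ =>
    (hinter x (by simpa using hx₁) (Or.inr hxr)).resolve_left (by rintro rfl; exact hu hxr)
  have hv₂ : IsPathOf G c (q.reverse.append C₁) := hq.reverse.append h.1 fun x hxq hx₁ =>
    (hinter x hx₁ (Or.inl (by simpa using hxq))).resolve_right
      (by rintro rfl; exact hv (by simpa using hxq))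
  have hlen := h.2.2.1
  have hq0 : q.length ≠ 0 := fun h0 => htu (eq_of_length_eq_zero h0).symm
  have hr0 : r.length ≠ 0 := fun h0 => htv (eq_of_length_eq_zero h0)
  simp only [length_append] at hlen ⊢
  refine ⟨q.length, by omega, by omega, ?_, ?_⟩
  · rw [hc.cycleDist_eq_min hq.reverse hu₂ (by simp; omega) htu]
    simp
  · rw [hc.cycleDist_eq_min hr hv₂ (by simp; omega) htv]
    simp

theorem ArcPair.exists_isPathOf_around {x y : V} (h : ArcPair G c C₁ C₂)
    (hx : s(u, x) ∈ C₁.edges) (hy : s(v, y) ∈ C₁.edges) (hx₂ : x ∉ C₂.support)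
    (hy₂ : y ∉ C₂.support) (hxy : x ≠ y) :
    ∃ A : G.Walk x y, IsPathOf G c A ∧ A.length = C₂.length + 2 ∧
      ∀ w ∈ C₂.support, w ∈ A.support := by
  have hxu : G.Adj x u := (C₁.adj_of_mem_edges hx).symm
  have hvy : G.Adj v y := C₁.adj_of_mem_edges hy
  have hxu' := isPathOf_cons_nil hxu (h.1.2 _ (Sym2.eq_swap ▸ hx))
  have hvy' := isPathOf_cons_nil hvy (h.1.2 _ hy)
  have hC₂y := h.2.1.append hvy' fun w hw hw' => by
    rcases (by simpa using hw' : w = v ∨ w = y) with rfl | rfl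
    exacts [rfl, absurd hw hy₂]
  refine ⟨(cons hxu nil).append (C₂.append (cons hvy nil)), hxu'.append hC₂y fun w hw hw' => ?_,
    by simp, fun w hw => by simp [hw]⟩
  rcases (by simpa using hw : w = x ∨ w = u) with rfl | rfl
  · rcases (by simpa using hw' : w ∈ C₂.support ∨ w = v ∨ w = y) with hw' | rfl | rfl
    exacts [absurd hw' hx₂, absurd C₂.end_mem_support hx₂, absurd rfl hxy]
  · rfl

theorem CGood.length_eq_cycleDist (hC : IsShortestEvenHole G c) {R : G.Walk s t}
    (hgood : CGood G c R) (hR : R.IsPath) (hs : s ∈ c.support) (ht : t ∈ c.support)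
    (hst : s ≠ t) (hle : R.length ≤ cycleDist G c s t) : R.length = cycleDist G c s t := by
  classical
  obtain ⟨Q, hQ, r', w, hw, hsupp⟩ := hgood
  have hcw := hC.2 r' w hw.1
  have hcount := hw.1.isCycle.length_add_card_inter hR hQ.1 hsupp
  have htwo := two_le_card_inter_support hst R Q
  obtain ⟨A, B, -, -, hAB, hA, hAle, h⟩ := hC.1.isCycle.exists_arcs hs ht hst
  rcases h Q hQ with rfl | rfl <;> omega

theorem WorstCShortcut.cGood_of_length_lt_s9 (hc : c.IsCycle) (hP : WorstCShortcut G c P)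
    {R : G.Walk s t} (hR : IsShortestPath G R) (h2 : 2 ≤ R.length) (hlt : R.length < P.length)
    (hs : s ∈ c.support) (ht : t ∈ c.support) (hst : s ≠ t) : CGood G c R := by
  obtain ⟨A, B, hA, -, -, hAd, -, -⟩ := hc.exists_arcs hs ht hst
  have hadj : ¬G.Adj s t := fun hadj => by
    have : R.length ≤ 1 := hR.2 (cons hadj nil)
    omega
  by_contra hbad
  have hPn := hP.2.1.2.2
  rcases hP.2.2.2 s t R ⟨hR.1, hst, hadj, hs, ht⟩ ⟨h2, hAd ▸ hR.2 A, by omega⟩ hbad with h | h <;>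
    omega

theorem WorstCShortcut.length_cases (hC : IsShortestEvenHole G c) (hP : WorstCShortcut G c P)
    {R : G.Walk s t} (hR : IsShortestPath G R) (hs : s ∈ c.support) (ht : t ∈ c.support)
    (hst : s ≠ t) :
    R.length = cycleDist G c s t ∨
      (R.length = P.length ∧ cycleDist G c s t ≤ cycleDist G c u v) ∨ P.length < R.length := by
  obtain ⟨A, B, hA, -, -, hAd, -, -⟩ := hC.1.isCycle.exists_arcs hs ht hst
  have hRd : R.length ≤ cycleDist G c s t := hAd ▸ hR.2 A
  have hR0 : R.length ≠ 0 := fun h0 => hst (eq_of_length_eq_zero h0)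
  by_cases hadj : G.Adj s t
  · have h1 : R.length ≤ 1 := hR.2 (cons hadj nil)
    exact Or.inl (by rw [hC.1.cycleDist_eq_one_of_adj hs ht hadj]; omega)
  by_cases hlt : P.length < R.length
  · exact Or.inr (Or.inr hlt)
  have hR2 : 2 ≤ R.length := by
    by_contra! h1
    exact hadj (adj_of_length_eq_one (p := R) (by omega))
  have hshort : CShortcut G c R := ⟨hR2, hRd, by have := hP.2.1.2.2; omega⟩
  by_cases hgood : CGood G c R
  · exact Or.inl (hgood.length_eq_cycleDist hC hR.1 hs ht hst hRd)
  · rcases hP.2.2.2 s t R ⟨hR.1, hst, hadj, hs, ht⟩ hshort hgood with h | h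
    exacts [absurd h hlt, Or.inr (Or.inl ⟨h.1.symm, h.2⟩)]

theorem WorstCShortcut.not_near_shortestPath_uv (hC : IsShortestEvenHole G c)
    (hP : WorstCShortcut G c P) (hshallow : CShallow G c P) (harc : ArcPair G c C₁ C₂)
    (hle : C₁.length ≤ C₂.length) {Puv : G.Walk u v} (hPuv : IsShortestPath G Puv) {z : V}
    (ht : t ∈ C₂.support) (htu : t ≠ u) (htv : t ≠ v) (hz : z ∈ Puv.support) (hzu : z ≠ u)
    (hzv : z ≠ v) (hzt : z = t ∨ G.Adj z t) : False := by
  classical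
  have ⟨⟨_, huv, _, hu, hv⟩, ⟨hP2, hPd, hPn⟩, _⟩ := hP
  have hc := hC.1.isCycle
  have htc := harc.2.1.mem_support huv ht
  have hd := harc.cycleDist_eq_s9 hc huv hle
  obtain ⟨j, hj0, hjb, hdu, hdv⟩ := harc.exists_cycleDist_eq_of_mem hc huv ht htu htv
  obtain ⟨Ru, hRu⟩ := exists_isShortestPath (C₂.takeUntil t ht).reverse
  obtain ⟨Rv, hRv⟩ := exists_isShortestPath (C₂.dropUntil t ht)
  have hcasesu := hP.length_cases hC hRu htc hu htu
  have hcasesv := hP.length_cases hC hRv htc hv htv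
  obtain ⟨q, r, rfl⟩ := mem_support_iff_exists_append.mp hz
  obtain ⟨W, hW⟩ : ∃ W : G.Walk t z, W.length ≤ 1 := by
    rcases hzt with rfl | hzt
    exacts [⟨nil, by simp⟩, ⟨cons hzt.symm nil, by simp⟩]
  have hRuz : Ru.length ≤ W.length + q.length := by simpa using hRu.2 (W.append q.reverse)
  have hRvz : Rv.length ≤ W.length + r.length := by simpa using hRv.2 (W.append r)
  have hqr : q.length + r.length ≤ P.length := by simpa using hPuv.2 P
  have hq0 : q.length ≠ 0 := fun h0 => hzu (eq_of_length_eq_zero h0).symm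
  have hr0 : r.length ≠ 0 := fun h0 => hzv (eq_of_length_eq_zero h0)
  have hshallow₁ := hshallow.1
  have hlen := harc.2.2.1
  obtain ⟨k, hk⟩ := hC.1.2
  omega

theorem WorstCShortcut.not_near_shortestPath_xy (hC : IsShortestEvenHole G c)
    (hP : WorstCShortcut G c P) (hshallow : CShallow G c P) (harc : ArcPair G c C₁ C₂)
    (hle : C₁.length ≤ C₂.length) {x y : V} (hx : s(u, x) ∈ C₁.edges) (hy : s(v, y) ∈ C₁.edges)
    {Pxy : G.Walk x y} (hPxy : IsShortestPath G Pxy) {z : V} (ht : t ∈ C₂.support)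
    (htu : t ≠ u) (htv : t ≠ v) (hz : z ∈ Pxy.support) (hzt : z = t ∨ G.Adj z t) : False := by
  classical
  have huv := hP.1.2.1
  have hc := hC.1.isCycle
  have hux := C₁.adj_of_mem_edges hx
  have hvy := C₁.adj_of_mem_edges hy
  have hx₁ := C₁.snd_mem_support_of_mem_edges hx
  have hy₁ := C₁.snd_mem_support_of_mem_edges hy
  have hx₂ : x ∉ C₂.support := fun h => (harc.eq_or_eq_of_mem hc huv hx₁ h).elim hux.ne'
    fun hxv => hP.1.2.2.1 (hxv ▸ hux)
  have hy₂ : y ∉ C₂.support := fun h => (harc.eq_or_eq_of_mem hc huv hy₁ h).elim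
    (fun hyu => hP.1.2.2.1 (hyu ▸ hvy).symm) hvy.ne'
  have ht₁ : t ∉ C₁.support := fun h => (harc.eq_or_eq_of_mem hc huv h ht).elim htu htv
  by_cases hPxy1 : Pxy.length ≤ 1
  · have hz₁ : z ∈ C₁.support := by
      rcases eq_or_eq_of_mem_support_of_length_le_one hPxy1 hz with rfl | rfl <;> assumption
    have hz₂ : z ∉ C₂.support := by
      rcases eq_or_eq_of_mem_support_of_length_le_one hPxy1 hz with rfl | rfl <;> assumption
    rcases hzt with rfl | hzt
    exacts [hz₂ ht, harc.not_adj_s9 hC.1 huv hz₁ hz₂ ht ht₁ hzt]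
  have hxy : x ≠ y := by
    rintro rfl
    have : Pxy.length ≤ 0 := hPxy.2 nil
    omega
  have hxc := harc.1.mem_support huv hx₁
  have hyc := harc.1.mem_support huv hy₁
  obtain ⟨A₂, hA₂, hA₂len, hC₂A₂⟩ := harc.exists_isPathOf_around hx hy hx₂ hy₂ hxy
  obtain ⟨A, B, hA, -, hAB, hAd, hAle, harcs⟩ := hc.exists_arcs hxc hyc hxy
  have hPxyA : Pxy.length ≤ A.length := hPxy.2 A
  have hshallow₁ := hshallow.1
  have hlen := harc.2.2.1
  have hd := harc.cycleDist_eq_s9 hc huv hle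
  have hPn := hP.2.1.2.2
  have hBA₂ : B = A₂ := by
    rcases harcs A₂ hA₂ with h | h
    · subst h
      omega
    · exact h.symm
  rw [hBA₂] at harcs hAB
  obtain ⟨Q, hQ, r', w, hw, hsupp⟩ :=
    hP.cGood_of_length_lt_s9 hc hPxy (by omega) (by omega) hxc hyc hxy
  have hcount := hw.1.isCycle.length_add_card_inter hPxy.1 hQ.1 hsupp
  have htwo := two_le_card_inter_support hxy Pxy Q
  have hcw := hC.2 r' w hw.1
  obtain rfl : A₂ = Q := ((harcs Q hQ).resolve_left fun h => by subst h; omega).symm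
  have hinter : ∀ a ∈ Pxy.support, a ∈ A₂.support → a = x ∨ a = y :=
    fun a h₁ h₂ => eq_or_eq_of_card_inter_support_le_two hxy (by omega) h₁ h₂
  have hz₂ : z ∉ C₂.support := fun h => (hinter z hz (hC₂A₂ z h)).elim
    (fun h' => hx₂ (h' ▸ h)) (fun h' => hy₂ (h' ▸ h))
  have hmem : ∀ a, a ∈ Pxy.support ∨ a ∈ C₂.support → a ∈ w.support := fun a ha => by
    have := Set.ext_iff.mp hsupp a
    simp only [suppSet, Set.mem_union, Set.mem_ofPred_eq] at this
    exact this.mpr (ha.imp_right (hC₂A₂ a))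
  have htw := hmem t (Or.inr ht)
  have hC₂w : ∀ b, s(t, b) ∈ C₂.edges → s(t, b) ∈ w.edges := fun b hb =>
    hw.1.mem_edges_of_adj htw (hmem b (Or.inr (C₂.snd_mem_support_of_mem_edges hb)))
      (C₂.adj_of_mem_edges hb)
  have hzt : G.Adj z t := hzt.resolve_left fun h => hz₂ (h ▸ ht)
  obtain ⟨a, b, hab, ha, hb⟩ := harc.2.1.1.exists_ne_of_mem ht htu htv
  rcases hw.1.isCycle.eq_or_eq_or_eq_of_mem_edges (hC₂w a ha) (hC₂w b hb)
      (hw.1.mem_edges_of_adj htw (hmem z (Or.inl hz)) hzt.symm) with h | h | h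
  · exact hab h
  · exact hz₂ (h ▸ C₂.snd_mem_support_of_mem_edges ha)
  · exact hz₂ (h ▸ C₂.snd_mem_support_of_mem_edges hb)

end

theorem stmt9 (G : SimpleGraph V) {r u v : V} (c : G.Walk r r)
    (hC : IsShortestEvenHole G c) (P : G.Walk u v)
    (hworst : WorstCShortcut G c P) (hshallow : CShallow G c P)
    (C1 C2 : G.Walk u v) (harc : ArcPair G c C1 C2) (hle : C1.length ≤ C2.length)
    (x y : V) (hx : s(u, x) ∈ C1.edges) (hy : s(v, y) ∈ C1.edges)
    (Puv : G.Walk u v) (hPuv : IsShortestPath G Puv)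
    (Pxy : G.Walk x y) (hPxy : IsShortestPath G Pxy) :
    (suppSet C2 \ {u, v}) ∩ closedNbhd G ((suppSet Puv ∪ suppSet Pxy) \ {u, v}) = ∅ ∧
    suppSet C2 ⊆ Hverts G Puv Pxy ∧
    (Hgraph G Puv Pxy).Reachable u v ∧
    ∀ Q : (Hgraph G Puv Pxy).Walk u v, IsShortestPath (Hgraph G Puv Pxy) Q →
      Q.length ≤ C2.length := by
  have hfar : ∀ t ∈ suppSet C2 \ {u, v},
      t ∉ closedNbhd G ((suppSet Puv ∪ suppSet Pxy) \ {u, v}) := by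
    rintro t ⟨ht, htuv⟩ hN
    obtain ⟨z, ⟨hz, hzuv⟩, hzt⟩ := mem_closedNbhd_iff.mp hN
    simp only [Set.mem_insert_iff, Set.mem_singleton_iff, not_or] at htuv hzuv
    rcases hz with hz | hz
    · exact hworst.not_near_shortestPath_uv hC hshallow harc hle hPuv ht htuv.1 htuv.2 hz hzuv.1
        hzuv.2 hzt
    · exact hworst.not_near_shortestPath_xy hC hshallow harc hle hx hy hPxy ht htuv.1 htuv.2 hz
        hzt
  have hsub : suppSet C2 ⊆ Hverts G Puv Pxy := fun t ht => by
    by_cases htuv : t ∈ ({u, v} : Set V)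
    · exact Or.inr htuv
    · exact Or.inl ⟨Set.mem_univ t, hfar t ⟨ht, htuv⟩⟩
  obtain ⟨W, hW⟩ := exists_walk_restrictTo C2 hsub
  exact ⟨Set.eq_empty_of_forall_notMem fun t ht => hfar t ht.1 ht.2, hsub, ⟨W⟩,
    fun Q hQ => hW ▸ hQ.2 W⟩
end

section
/- Let C be a shortest even hole of a graph G that is good in G, and let u, v be vertices of C with 2 ≤ d_C(u,v) and d_C(u,v) < ‖C‖/4. Then d_G(u,v) = d_C(u,v). -/
open SimpleGraph

variable {V : Type*}

/-! A shortest `uv`-path `W` of `G` with `‖W‖ < d_C(u,v)` would be a `C`-shortcut, hence `C`-good: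
together with a `uv`-path `Q` of `C` it spans a shortest even hole, which has `‖C‖` vertices, so
`‖C‖ ≤ ‖W‖ + ‖Q‖`. But a `uv`-path of the cycle `C` has length `d_C(u,v)` or `‖C‖ - d_C(u,v)`
(it runs around `C` in one direction), and both are too short since `‖W‖ < d_C(u,v) < ‖C‖/4`. -/

/-- The position of `x` on `c` modulo `‖c‖`, with junk value `0` off `c`. -/
noncomputable def cycleIndex {G : SimpleGraph V} {r : V} (c : G.Walk r r) (x : V) :
    ZMod c.length :=
  open Classical in
  if h : ∃ i < c.length, c.getVert i = x then (h.choose : ZMod c.length) else 0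

namespace SimpleGraph.Walk

variable {G : SimpleGraph V} {r u v : V}

lemma exists_lt_length_getVert_eq {c : G.Walk r r} (hc : ¬c.Nil) {x : V} (hx : x ∈ c.support) :
    ∃ i < c.length, c.getVert i = x := by
  obtain ⟨i, rfl, hi⟩ := mem_support_iff_exists_getVert.mp hx
  rcases hi.lt_or_eq with hi | rfl
  · exact ⟨i, hi, rfl⟩
  · exact ⟨0, not_nil_iff_lt_length.mp hc, by simp⟩

lemma IsCycle.cycleIndex_getVert {c : G.Walk r r} (hc : c.IsCycle) {j : ℕ} (hj : j ≤ c.length) :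
    cycleIndex c (c.getVert j) = j := by
  have h : ∃ i < c.length, c.getVert i = c.getVert j :=
    exists_lt_length_getVert_eq hc.not_nil (getVert_mem_support c j)
  obtain ⟨hi, hij⟩ := h.choose_spec
  rw [cycleIndex, dif_pos h]
  rcases hj.lt_or_eq with hj | rfl
  · rw [hc.getVert_injOn' (by simp only [Set.mem_ofPred_eq]; omega)
      (by simp only [Set.mem_ofPred_eq]; omega) hij]
  · have hr := (hc.getVert_endpoint_iff hi.le).mp (hij.trans (getVert_length c))
    rw [ZMod.natCast_self, hr.resolve_right hi.ne, Nat.cast_zero]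

lemma IsCycle.cycleIndex_injOn {c : G.Walk r r} (hc : c.IsCycle) :
    Set.InjOn (cycleIndex c) {x | x ∈ c.support} := by
  intro a ha b hb hab
  obtain ⟨i, hi, rfl⟩ := exists_lt_length_getVert_eq hc.not_nil ha
  obtain ⟨j, hj, rfl⟩ := exists_lt_length_getVert_eq hc.not_nil hb
  rw [hc.cycleIndex_getVert hi.le, hc.cycleIndex_getVert hj.le,
    ZMod.natCast_eq_natCast_iff', Nat.mod_eq_of_lt hi, Nat.mod_eq_of_lt hj] at hab
  rw [hab]

lemma IsCycle.cycleIndex_sub_of_mem_edges {c : G.Walk r r} (hc : c.IsCycle) {a b : V}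
    (h : s(a, b) ∈ c.edges) :
    cycleIndex c b - cycleIndex c a = 1 ∨ cycleIndex c b - cycleIndex c a = -1 := by
  obtain ⟨i, he, hi⟩ := c.toSubgraph_adj_iff.mp (adj_toSubgraph_iff_mem_edges.mpr h)
  rcases Sym2.eq_iff.mp he with ⟨rfl, rfl⟩ | ⟨rfl, rfl⟩ <;>
    rw [hc.cycleIndex_getVert hi.le, hc.cycleIndex_getVert hi] <;> push_cast
  · exact .inl (by ring)
  · exact .inr (by ring)

lemma IsPath.ncard_suppSet_s12 {P : G.Walk u v} (hP : P.IsPath) :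
    (suppSet P).ncard = P.length + 1 := by
  classical
  rw [suppSet, ← List.coe_toFinset, Set.ncard_coe_finset,
    List.toFinset_card_of_nodup hP.support_nodup, length_support]

lemma IsCycle.ncard_suppSet_s12 {c : G.Walk r r} (hc : c.IsCycle) :
    (suppSet c).ncard = c.length := by
  classical
  have htail : suppSet c = {x | x ∈ c.support.tail} := by
    ext x
    refine ⟨fun hx => ?_, List.mem_of_mem_tail⟩
    have hx : x ∈ r :: c.support.tail := by rwa [cons_tail_support]
    rcases List.mem_cons.mp hx with rfl | hx
    · exact end_mem_tail_support hc.not_nil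
    · exact hx
  rw [htail, ← List.coe_toFinset, Set.ncard_coe_finset,
    List.toFinset_card_of_nodup hc.support_nodup, List.length_tail, length_support,
    Nat.add_sub_cancel]

lemma IsCycle.length_le_of_suppSet_eq_union {w : G.Walk r r} (hw : w.IsCycle)
    {P Q : G.Walk u v} (hP : P.IsPath) (hQ : Q.IsPath) (huv : u ≠ v)
    (h : suppSet w = suppSet P ∪ suppSet Q) : w.length ≤ P.length + Q.length := by
  have hQpos : Q.length ≠ 0 := fun h => huv (eq_of_length_eq_zero h)
  have hends : ({u, v} : Set V) ⊆ suppSet Q := by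
    simp [Set.insert_subset_iff, suppSet]
  have hunion : suppSet P ∪ suppSet Q = suppSet P ∪ (suppSet Q \ {u, v}) := by
    ext x
    simp only [suppSet, Set.mem_union, Set.mem_sdiff, Set.mem_insert_iff,
      Set.mem_singleton_iff, Set.mem_ofPred_eq]
    by_cases hx : x = u ∨ x = v
    · rcases hx with rfl | rfl <;> simp
    · tauto
  calc w.length = (suppSet P ∪ (suppSet Q \ {u, v})).ncard := by
        rw [← hw.ncard_suppSet_s12, h, hunion]
    _ ≤ (suppSet P).ncard + (suppSet Q \ {u, v}).ncard := Set.ncard_union_le _ _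
    _ = P.length + Q.length := by
        rw [Set.ncard_sdiff hends, Set.ncard_pair huv, hP.ncard_suppSet_s12, hQ.ncard_suppSet_s12]
        omega

end SimpleGraph.Walk

open SimpleGraph Walk

variable {G : SimpleGraph V} {r u v : V} {c : G.Walk r r}

lemma IsPathOf.suppSet_subset {P : G.Walk u v} (hP : IsPathOf G c P) (hnil : ¬P.Nil) :
    suppSet P ⊆ suppSet c := by
  intro x hx
  obtain ⟨e, he, hxe⟩ := (mem_support_iff_exists_mem_edges_of_not_nil hnil).mp hx
  obtain ⟨y, rfl⟩ := Sym2.mem_iff_exists.mp hxe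
  exact fst_mem_support_of_mem_edges c (hP.2 _ he)

lemma IsPathOf.length_lt (hc : c.IsCycle) {P : G.Walk u v} (hP : IsPathOf G c P) :
    P.length < c.length := by
  by_cases hnil : P.Nil
  · rw [hnil.length_eq_zero]
    exact hc.three_le_length.trans_lt' (by norm_num)
  · have := Set.ncard_le_ncard (hP.suppSet_subset hnil) (List.finite_toSet c.support)
    rw [hP.1.ncard_suppSet_s12, hc.ncard_suppSet_s12] at this
    omega

/-- `P` runs around `c` in a single direction `ε`; the `P.snd` clause drives the induction. -/
lemma IsPathOf.exists_cycleIndex_eq (hc : c.IsCycle) {P : G.Walk u v} (hP : IsPathOf G c P)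
    (hnil : ¬P.Nil) :
    ∃ ε : ZMod c.length, (ε = 1 ∨ ε = -1) ∧ cycleIndex c P.snd = cycleIndex c u + ε ∧
      cycleIndex c v = cycleIndex c u + P.length * ε := by
  induction P with
  | nil => exact absurd .nil hnil
  | @cons u b v hub q ih =>
    obtain ⟨hpath, hedges⟩ := hP
    rw [cons_isPath_iff] at hpath
    have hub_c : s(u, b) ∈ c.edges := hedges _ (by simp)
    have hq : IsPathOf G c q := ⟨hpath.1, fun e he => hedges e (by simp [he])⟩
    obtain ⟨δ, hδ, hb⟩ : ∃ δ, (δ = 1 ∨ δ = -1) ∧ cycleIndex c b = cycleIndex c u + δ :=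
      ⟨_, hc.cycleIndex_sub_of_mem_edges hub_c, by ring⟩
    cases q with
    | nil => exact ⟨δ, hδ, hb, by simp [hb]⟩
    | @cons _ w _ hbw q' =>
      obtain ⟨ε, hε, hw, hv⟩ := ih hq not_nil_cons
      have hbw_c : s(b, w) ∈ c.edges := hq.2 _ (by simp)
      -- going back along `c` would revisit `u`
      have hδε : δ = ε := by
        by_contra hne
        have hwu : cycleIndex c w = cycleIndex c u := by
          simp only [snd_cons] at hw
          rcases hδ with rfl | rfl <;> rcases hε with rfl | rfl <;>
            first | exact absurd rfl hne | linear_combination hw + hb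
        refine hpath.2 ?_
        rw [← hc.cycleIndex_injOn (snd_mem_support_of_mem_edges c hbw_c)
          (fst_mem_support_of_mem_edges c hub_c) hwu]
        simp
      subst hδε
      refine ⟨δ, hδ, by simpa using hb, ?_⟩
      rw [hv, hb]
      simp only [length_cons]
      push_cast
      ring

lemma IsPathOf.length_eq_or_add_eq (hc : c.IsCycle) (huv : u ≠ v) {P Q : G.Walk u v}
    (hP : IsPathOf G c P) (hQ : IsPathOf G c Q) :
    P.length = Q.length ∨ P.length + Q.length = c.length := by
  obtain ⟨ε, hε, -, hPv⟩ := hP.exists_cycleIndex_eq hc fun h => huv h.eq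
  obtain ⟨δ, hδ, -, hQv⟩ := hQ.exists_cycleIndex_eq hc fun h => huv h.eq
  have hPlt := hP.length_lt hc
  have hQlt := hQ.length_lt hc
  have hPpos : P.length ≠ 0 := fun h => huv (eq_of_length_eq_zero h)
  have hcast : (P.length : ZMod c.length) = Q.length ∨
      ((P.length + Q.length : ℕ) : ZMod c.length) = 0 := by
    rcases hε with rfl | rfl <;> rcases hδ with rfl | rfl <;> push_cast
    · exact .inl (by linear_combination hQv - hPv)
    · exact .inr (by linear_combination hQv - hPv)
    · exact .inr (by linear_combination hPv - hQv)
    · exact .inl (by linear_combination hPv - hQv)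
  rcases hcast with h | h
  · rw [ZMod.natCast_eq_natCast_iff', Nat.mod_eq_of_lt hPlt, Nat.mod_eq_of_lt hQlt] at h
    exact .inl h
  · exact .inr (Nat.eq_of_dvd_of_lt_two_mul (by omega) ((ZMod.natCast_eq_zero_iff _ _).mp h)
      (by omega))

lemma SimpleGraph.Walk.IsCycle.exists_isPathOf (hc : c.IsCycle) (hu : u ∈ c.support)
    (hv : v ∈ c.support) : ∃ P : G.Walk u v, IsPathOf G c P := by
  classical
  have hv' : v ∈ (c.rotate u hu).support := by
    rwa [← mem_verts_toSubgraph, toSubgraph_rotate, mem_verts_toSubgraph]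
  exact ⟨_, (hc.rotate hu).isPath_takeUntil hv', fun e he =>
    (c.rotate_edges u hu).mem_iff.mp (edges_takeUntil_subset_edges _ hv' he)⟩

lemma cycleDist_le {P : G.Walk u v} (hP : IsPathOf G c P) : cycleDist G c u v ≤ P.length :=
  Nat.sInf_le ⟨P, hP, rfl⟩

lemma SimpleGraph.Walk.IsCycle.exists_isPathOf_length_eq_cycleDist (hc : c.IsCycle)
    (hu : u ∈ c.support) (hv : v ∈ c.support) :
    ∃ P : G.Walk u v, IsPathOf G c P ∧ P.length = cycleDist G c u v :=
  have ⟨P, hP⟩ := hc.exists_isPathOf hu hv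
  Nat.sInf_mem (s := {n | ∃ P : G.Walk u v, IsPathOf G c P ∧ P.length = n}) ⟨_, P, hP, rfl⟩

lemma cycleDist_self : cycleDist G c u u = 0 :=
  Nat.eq_zero_of_le_zero (cycleDist_le ⟨.nil, by simp⟩)

lemma cycleDist_le_one (hadj : G.Adj u v) (h : s(u, v) ∈ c.edges) : cycleDist G c u v ≤ 1 :=
  cycleDist_le (P := hadj.toWalk) ⟨by simp [hadj.ne], by simpa using h⟩

theorem stmt12 (G : SimpleGraph V) {r : V} (c : G.Walk r r)
    (hC : IsShortestEvenHole G c) (hgood : GoodHole G c)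
    (u v : V) (hu : u ∈ c.support) (hv : v ∈ c.support)
    (h2 : 2 ≤ cycleDist G c u v) (h4 : 4 * cycleDist G c u v < c.length) :
    G.dist u v = cycleDist G c u v := by
  have hc : c.IsCycle := hC.1.1.1.1
  obtain ⟨P, hP, hPlen⟩ := hc.exists_isPathOf_length_eq_cycleDist hu hv
  have huv : u ≠ v := by
    rintro rfl
    rw [cycleDist_self] at h2
    omega
  have hnadj : ¬G.Adj u v := fun hadj =>
    absurd (cycleDist_le_one hadj (hC.1.1.1.2 u v hu hv hadj)) (by omega)
  refine le_antisymm (hPlen ▸ dist_le P) (not_lt.mp fun hlt => ?_)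
  obtain ⟨W, hW⟩ := Reachable.exists_walk_length_eq_dist ⟨P⟩
  have hW2 : 2 ≤ W.length := by
    have h0 : G.dist u v ≠ 0 := dist_ne_zero_iff_ne_and_reachable.mpr ⟨huv, ⟨P⟩⟩
    have h1 : G.dist u v ≠ 1 := mt dist_eq_one_iff_adj.mp hnadj
    omega
  have hWpath := W.isPath_of_length_eq_dist hW
  obtain ⟨Q, hQ, r', w, hw, hsupp⟩ :=
    hgood u v W ⟨hWpath, huv, hnadj, hu, hv⟩ ⟨hW2, by omega, by omega⟩
  have hwlen : w.length = c.length := le_antisymm (hw.2 _ c hC.1) (hC.2 _ w hw.1)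
  have hcount := hw.1.1.1.1.length_le_of_suppSet_eq_union hWpath hQ.1 huv hsupp
  rcases hQ.length_eq_or_add_eq hc huv hP with h | h <;> omega
end
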